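/- Fix n > 0 and p ≥ 1, let R = {η ∈ ℝ^p : ‖η‖ ≤ √n} be the spherical region, fix any η₀ with ‖η₀‖ = √n, and let Z be a standard Gaussian random vector in ℝ^p. Define the exact p-value α̂_∞(y) = Pr{‖Z + η₀‖² ≥ ‖y‖²}. Then for every η with ‖η‖ = √n (i.e., η on the boundary ∂R) and Y = η + Z, the test is exactly unbiased: for every α ∈ (0,1), Pr{α̂_∞(Y) < α} = α. -/

import Mathlib

/-!
A reflection of `ℝ^p` exchanging `η₀` and `η` preserves the standard Gaussian law, so
`‖Y‖² = ‖η + Z‖²` has the same law as `W = ‖Z + η₀‖²`, and `α̂_∞(Y)` is the survival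
function of `W` evaluated at an independent copy of `W`. The level sets of `W` are spheres,
which are Lebesgue-null, so `W` has no atoms and a continuous distribution function; the
probability integral transform then makes `α̂_∞(Y)` uniform on `(0, 1)`.
-/

open MeasureTheory ProbabilityTheory

/-- The Gaussian measure `N_p(m, v·I_p)` on `ℝ^p`, as the product of one-dimensional
Gaussian measures with means the coordinates of `m` and common variance `v`. -/
noncomputable def gaussianPi (p : ℕ) (m : EuclideanSpace ℝ (Fin p)) (v : NNReal) :
    Measure (EuclideanSpace ℝ (Fin p)) :=
  (Measure.pi fun i => gaussianReal (m i) v).map (MeasurableEquiv.toLp 2 (Fin p → ℝ))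

open Set Filter

theorem MeasureTheory.Measure.AbsolutelyContinuous.pi_fin {n : ℕ} {X : Fin n → Type*}
    [∀ i, MeasurableSpace (X i)] {μ ν : ∀ i, Measure (X i)} [∀ i, SigmaFinite (μ i)]
    [∀ i, SigmaFinite (ν i)] (h : ∀ i, μ i ≪ ν i) : Measure.pi μ ≪ Measure.pi ν := by
  induction n with
  | zero => rw [Measure.pi_of_empty μ, Measure.pi_of_empty ν]
  | succ n ih =>
    let e := MeasurableEquiv.piFinSuccAbove X 0
    rw [← e.map_symm_map (μ := Measure.pi μ), ← e.map_symm_map (μ := Measure.pi ν),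
      (measurePreserving_piFinSuccAbove μ 0).map_eq,
      (measurePreserving_piFinSuccAbove ν 0).map_eq]
    exact ((h 0).prod (ih fun _ => h _)).map e.symm.measurable

section CDF

variable {ν : Measure ℝ} [IsProbabilityMeasure ν]

theorem ProbabilityTheory.measure_Ioi_eq_ofReal_one_sub_cdf (x : ℝ) :
    ν (Ioi x) = ENNReal.ofReal (1 - cdf ν x) := by
  conv_lhs => rw [← measure_cdf (μ := ν)]
  exact (cdf ν).measure_Ioi (tendsto_cdf_atTop ν) x

variable [NullSingletonClass ν]

theorem ProbabilityTheory.continuous_cdf : Continuous (cdf ν) := by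
  refine continuous_iff_continuousAt.2 fun x => ?_
  rw [(monotone_cdf ν).continuousAt_iff_leftLim_eq_rightLim, StieltjesFunction.rightLim_eq]
  have hjump := (cdf ν).measure_singleton x
  rw [measure_cdf, measure_singleton, eq_comm, ENNReal.ofReal_eq_zero] at hjump
  linarith [(monotone_cdf ν).leftLim_le (le_refl x)]

theorem ProbabilityTheory.measureReal_Ici_eq_one_sub_cdf (x : ℝ) :
    ν.real (Ici x) = 1 - cdf ν x := by
  rw [measureReal_def, ← measure_congr Ioi_ae_eq_Ici, measure_Ioi_eq_ofReal_one_sub_cdf,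
    ENNReal.toReal_ofReal (sub_nonneg.2 (cdf_le_one ν x))]

theorem ProbabilityTheory.measure_setOf_measureReal_Ici_lt {α : ℝ} (hα : α ∈ Ioo 0 1) :
    ν {s | ν.real (Ici s) < α} = ENNReal.ofReal α := by
  set F := cdf ν
  obtain ⟨a, ha⟩ :=
    ((tendsto_cdf_atBot ν).eventually (gt_mem_nhds (by linarith [hα.2] : 0 < 1 - α))).exists
  obtain ⟨b, hb⟩ :=
    ((tendsto_cdf_atTop ν).eventually (lt_mem_nhds (by linarith [hα.1] : 1 - α < 1))).exists
  have hne : (F ⁻¹' {1 - α}).Nonempty :=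
    intermediate_value_univ a b continuous_cdf ⟨ha.le, hb.le⟩
  have hbdd : BddAbove (F ⁻¹' {1 - α}) := ⟨b, fun x (hx : F x = 1 - α) =>
    not_lt.1 fun hbx => hb.not_ge (hx ▸ monotone_cdf ν hbx.le)⟩
  set t := sSup (F ⁻¹' {1 - α})
  have ht : F t = 1 - α := (isClosed_singleton.preimage continuous_cdf).csSup_mem hne hbdd
  have hset : {s | ν.real (Ici s) < α} = Ioi t := by
    ext s
    simp only [mem_ofPred_eq, mem_Ioi, measureReal_Ici_eq_one_sub_cdf]
    constructor
    · intro hs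
      by_contra! hst
      linarith [monotone_cdf ν hst]
    · intro hts
      have hFs : F s ≠ 1 - α := fun h => (le_csSup hbdd h).not_gt hts
      exact sub_lt_comm.1 ((ht ▸ monotone_cdf ν hts.le).lt_of_ne hFs.symm)
  rw [hset, measure_Ioi_eq_ofReal_one_sub_cdf, ht, sub_sub_cancel]

end CDF

theorem nullSingletonClass_map_norm_add_sq {E : Type*} [NormedAddCommGroup E] [NormedSpace ℝ E]
    [Nontrivial E] [FiniteDimensional ℝ E] [MeasurableSpace E] [BorelSpace E] {μ ν : Measure E}
    [ν.IsAddHaarMeasure] (hμ : μ ≪ ν) (c : E) :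
    NullSingletonClass (μ.map fun z => ‖z + c‖ ^ 2) := by
  refine ⟨fun t => ?_⟩
  rw [Measure.map_apply (by fun_prop) (measurableSet_singleton t)]
  refine hμ (measure_mono_null (fun z (hz : ‖z + c‖ ^ 2 = t) => ?_)
    (Measure.addHaar_sphere ν (-c) √t))
  rw [Metric.mem_sphere, dist_eq_norm, sub_neg_eq_add, ← hz, Real.sqrt_sq (norm_nonneg _)]

theorem stdGaussian_map_norm_add_sq_eq {E : Type*} [NormedAddCommGroup E] [InnerProductSpace ℝ E]
    [FiniteDimensional ℝ E] [MeasurableSpace E] [BorelSpace E] {a b : E} (h : ‖a‖ = ‖b‖) :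
    (stdGaussian E).map (fun z => ‖z + a‖ ^ 2) =
      (stdGaussian E).map (fun z => ‖z + b‖ ^ 2) := by
  set e := (ℝ ∙ (a - b))ᗮ.reflection
  have hab : e a = b := Submodule.reflection_sub h
  conv_rhs => rw [← stdGaussian_map e, Measure.map_map (by fun_prop) e.continuous.measurable]
  congr 1
  ext z
  simp [← hab, ← map_add]

theorem stdGaussian_euclideanSpace_absolutelyContinuous (n : ℕ) :
    stdGaussian (EuclideanSpace ℝ (Fin n)) ≪ volume := by
  rw [← map_pi_eq_stdGaussian, ← (PiLp.volume_preserving_toLp (Fin n)).map_eq, volume_pi]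
  exact (Measure.AbsolutelyContinuous.pi_fin fun _ =>
    gaussianReal_absolutelyContinuous 0 one_ne_zero).map (by fun_prop)

theorem gaussianPi_zero_one_eq_stdGaussian (p : ℕ) :
    gaussianPi p 0 1 = stdGaussian (EuclideanSpace ℝ (Fin p)) := by
  rw [← map_pi_eq_stdGaussian]
  rfl

theorem spherical_exact_pvalue_exactly_unbiased_general
    (p : ℕ) (hp : 1 ≤ p) (n : ℝ)
    (η₀ : EuclideanSpace ℝ (Fin p)) (hη₀ : ‖η₀‖ = Real.sqrt n)
    (alphaInf : EuclideanSpace ℝ (Fin p) → ℝ)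
    (halphaInf : ∀ y, alphaInf y =
      (gaussianPi p 0 1 {z | ‖y‖ ^ 2 ≤ ‖z + η₀‖ ^ 2}).toReal)
    (η : EuclideanSpace ℝ (Fin p)) (hη : ‖η‖ = Real.sqrt n)
    (α : ℝ) (hα : α ∈ Set.Ioo (0 : ℝ) 1) :
    gaussianPi p 0 1 {z | alphaInf (η + z) < α} = ENNReal.ofReal α := by
  have : Nonempty (Fin p) := ⟨⟨0, hp⟩⟩
  rw [gaussianPi_zero_one_eq_stdGaussian] at halphaInf ⊢
  set μ := stdGaussian (EuclideanSpace ℝ (Fin p))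
  set ν := μ.map fun z => ‖z + η₀‖ ^ 2
  have : IsProbabilityMeasure ν := Measure.isProbabilityMeasure_map (by fun_prop)
  have : NullSingletonClass ν :=
    nullSingletonClass_map_norm_add_sq (stdGaussian_euclideanSpace_absolutelyContinuous p) η₀
  have hlaw : μ.map (fun z => ‖z + η‖ ^ 2) = ν :=
    stdGaussian_map_norm_add_sq_eq (hη.trans hη₀.symm)
  have hmeas : MeasurableSet {s | ν.real (Ici s) < α} :=
    (Antitone.measurable fun _ _ hst => measureReal_mono (Ici_subset_Ici.2 hst)) measurableSet_Iio
  have halpha : ∀ y, alphaInf y = ν.real (Ici (‖y‖ ^ 2)) := fun y => by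
    rw [halphaInf, map_measureReal_apply (by fun_prop) measurableSet_Ici]
    rfl
  have hevent : {z | alphaInf (η + z) < α} =
      (fun z => ‖z + η‖ ^ 2) ⁻¹' {s | ν.real (Ici s) < α} := by
    simp only [halpha, add_comm η]
    rfl
  rw [hevent, ← Measure.map_apply (by fun_prop) hmeas, hlaw]
  exact measure_setOf_measureReal_Ici_lt hα

/-- For the spherical region `R = {η : ‖η‖ ≤ √n}`, the exact p-value
`α̂_∞(y) = Pr{‖Z + η₀‖² ≥ ‖y‖²}` (with `‖η₀‖ = √n`, `Z` standard Gaussian) is exactly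
unbiased: for every `η` on the boundary (`‖η‖ = √n`) and `Y = η + Z`,
`Pr{α̂_∞(Y) < α} = α` for all `α ∈ (0,1)`. -/
theorem spherical_exact_pvalue_exactly_unbiased
    (p : ℕ) (hp : 1 ≤ p) (n : ℝ) (hn : 0 < n)
    (η₀ : EuclideanSpace ℝ (Fin p)) (hη₀ : ‖η₀‖ = Real.sqrt n)
    (alphaInf : EuclideanSpace ℝ (Fin p) → ℝ)
    (halphaInf : ∀ y, alphaInf y =
      (gaussianPi p 0 1 {z | ‖y‖ ^ 2 ≤ ‖z + η₀‖ ^ 2}).toReal)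
    (η : EuclideanSpace ℝ (Fin p)) (hη : ‖η‖ = Real.sqrt n)
    (α : ℝ) (hα : α ∈ Set.Ioo (0 : ℝ) 1) :
    gaussianPi p 0 1 {z | alphaInf (η + z) < α} = ENNReal.ofReal α :=
  spherical_exact_pvalue_exactly_unbiased_general p hp n η₀ hη₀ alphaInf halphaInf η hη α hα
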